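/- For a fixed partition Q and fixed weights θ with θ_r > 0 for all r, choosing each mode entry Z_{lr} to be a most frequent value of feature r among objects assigned to cluster l minimizes P(Q,θ) = Σ_l Σ_i Σ_r q_{il} θ_r d(x_{ir}, Z_{lr}) over all choices of modes Z. -/

import Mathlib

open Finset

/- Since the objective separates over features, it suffices to treat one feature `r` at a time.
For it, the number of mismatches under the modes `Z` is the number of objects minus the number of
matches, and the matches split over the clusters `l` into the frequencies of the values `Z l r`
in cluster `l`; choosing each `Z l r` most frequent maximises every summand. -/

section ClusterCounts

variable {ι κ α : Type*} [Fintype ι] [Fintype κ] [DecidableEq κ] [DecidableEq α]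

theorem sum_match_eq_sum_cluster_frequency (a : ι → κ) (v : ι → α) (c : κ → α) :
    (∑ i, if v i = c (a i) then (1 : ℝ) else 0) =
      ∑ l, ∑ i, if a i = l ∧ v i = c l then (1 : ℝ) else 0 := by
  rw [sum_comm]
  refine sum_congr rfl fun i _ => ?_
  rw [sum_eq_single (a i) (fun l _ hl => by simp [Ne.symm hl]) (by simp)]
  simp

theorem sum_mismatch_eq_card_sub_sum_match (v w : ι → α) :
    (∑ i, if v i = w i then (0 : ℝ) else 1) =
      Fintype.card ι - ∑ i, if v i = w i then (1 : ℝ) else 0 := by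
  have h : ∀ i, (if v i = w i then (0 : ℝ) else 1) = 1 - if v i = w i then 1 else 0 := fun i => by
    split_ifs <;> norm_num
  simp only [h, sum_sub_distrib, sum_const, card_univ, nsmul_eq_mul, mul_one]

theorem sum_mismatch_le_of_mode (a : ι → κ) (v : ι → α) (c c' : κ → α)
    (hc : ∀ l z, (∑ i, if a i = l ∧ v i = z then (1 : ℝ) else 0) ≤
      ∑ i, if a i = l ∧ v i = c l then (1 : ℝ) else 0) :
    (∑ i, if v i = c (a i) then (0 : ℝ) else 1) ≤ ∑ i, if v i = c' (a i) then (0 : ℝ) else 1 := by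
  rw [sum_mismatch_eq_card_sub_sum_match, sum_mismatch_eq_card_sub_sum_match,
    sum_match_eq_sum_cluster_frequency, sum_match_eq_sum_cluster_frequency]
  exact sub_le_sub_left (sum_le_sum fun l _ => hc l (c' l)) _

end ClusterCounts

/-- For a fixed partition (assignment `a`) and fixed positive
weights `θ`, choosing each mode entry `Zstar l r` to be a most frequent value of
feature `r` among objects assigned to cluster `l` minimizes the objective
`P(Q,θ)` over all choices of modes `Z`. -/
theorem stmt_19 {α : Type*} [DecidableEq α] {n k σ : ℕ}
    (x : Fin n → Fin σ → α) (a : Fin n → Fin k)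
    (θ : Fin σ → ℝ) (hθ : ∀ r, 0 < θ r)
    (Zstar : Fin k → Fin σ → α)
    (hmode : ∀ (l : Fin k) (r : Fin σ) (z : α),
      (∑ i, (if a i = l ∧ x i r = z then (1 : ℝ) else 0)) ≤
        ∑ i, (if a i = l ∧ x i r = Zstar l r then (1 : ℝ) else 0)) :
    ∀ Z : Fin k → Fin σ → α,
      (∑ i, ∑ r, θ r * (if x i r = Zstar (a i) r then (0 : ℝ) else 1)) ≤
        ∑ i, ∑ r, θ r * (if x i r = Z (a i) r then (0 : ℝ) else 1) := by
  intro Z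
  rw [sum_comm, sum_comm (f := fun i r => θ r * if x i r = Z (a i) r then (0 : ℝ) else 1)]
  simp only [← mul_sum]
  exact sum_le_sum fun r _ => mul_le_mul_of_nonneg_left
    (sum_mismatch_le_of_mode a (x · r) (Zstar · r) (Z · r) (hmode · r)) (hθ r).le
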